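/- arXiv:2604.28068 — 2 statements merged into one kernel-verified Lean document; each statement's English description precedes it below -/
import Mathlib

section
/- Let d, m be positive integers, A, B₁, …, B_m ∈ ℝ^{d×d} and Λ, Γ₁, …, Γ_m ∈ ℝ^d. Suppose M : ℝ → ℝ^d is differentiable with M'(t) = A M(t) + Λ for all t ∈ ℝ, and P : ℝ → ℝ^{d×d} is differentiable (entrywise) with P'(t) = A P(t) + P(t) Aᵀ + Λ M(t)ᵀ + M(t) Λᵀ + Σ_{i=1}^m (B_i P(t) B_iᵀ + B_i M(t) Γ_iᵀ + Γ_i M(t)ᵀ B_iᵀ + Γ_i Γ_iᵀ) for all t ∈ ℝ. Define Q(t) := (vec(P(t)), M(t)) ∈ ℝ^{d²+d}, the block matrix 𝔸 := [[ (I_d⊗A)+(A⊗I_d)+Σ_{i=1}^m B_i⊗B_i , (I_d⊗Λ)+(Λ⊗I_d)+Σ_{i=1}^m ((Γ_i⊗B_i)+(B_i⊗Γ_i)) ],[ 0 , A ]] ∈ ℝ^{(d²+d)×(d²+d)}, and the vector S := (Σ_{i=1}^m (Γ_i⊗I_d)Γ_i , Λ) ∈ ℝ^{d²+d}. Then Q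 is differentiable with Q'(t) = 𝔸 Q(t) + S for all t ∈ ℝ. -/
open Matrix Kronecker

/-- Column-major vectorization: `vec A` is indexed by pairs `(j, i)` with entry `A i j`. -/
def Matrix.vecFin {m n : ℕ} (A : Matrix (Fin m) (Fin n) ℝ) : Fin n × Fin m → ℝ :=
  fun p => A p.2 p.1

/-- Kronecker product `v ⊗ B` of a vector `v ∈ ℝ^d` (viewed as a `d×1` column matrix)
with a matrix `B ∈ ℝ^{d×d}`: `(v ⊗ B)_{(i,k),l} = v i * B k l`. -/
def kronVecMat {d : ℕ} (v : Fin d → ℝ) (B : Matrix (Fin d) (Fin d) ℝ) :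
    Matrix (Fin d × Fin d) (Fin d) ℝ :=
  fun p l => v p.1 * B p.2 l

/-- Kronecker product `B ⊗ v` of a matrix `B ∈ ℝ^{d×d}` with a vector `v ∈ ℝ^d`
(viewed as a `d×1` column matrix): `(B ⊗ v)_{(i,k),j} = B i j * v k`. -/
def kronMatVec {d : ℕ} (B : Matrix (Fin d) (Fin d) ℝ) (v : Fin d → ℝ) :
    Matrix (Fin d × Fin d) (Fin d) ℝ :=
  fun p j => B p.1 j * v p.2

/-- The pair `Q = (vec P, M)` of the first and second moment ODEs satisfies the block
linear ODE `Q' = 𝔸 Q + S`. -/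
theorem moment_block_ode
    (d m : ℕ) (hd : 0 < d) (hm : 0 < m)
    (A : Matrix (Fin d) (Fin d) ℝ) (B : Fin m → Matrix (Fin d) (Fin d) ℝ)
    (Λ : Fin d → ℝ) (Γ : Fin m → Fin d → ℝ)
    (M : ℝ → Fin d → ℝ) (P : ℝ → Matrix (Fin d) (Fin d) ℝ)
    (hM : ∀ t : ℝ, HasDerivAt M (A.mulVec (M t) + Λ) t)
    (hP : ∀ (t : ℝ) (i j : Fin d), HasDerivAt (fun s => P s i j)
      ((A * P t + P t * Aᵀ + vecMulVec Λ (M t) + vecMulVec (M t) Λ +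
        ∑ k : Fin m, (B k * P t * (B k)ᵀ + B k * vecMulVec (M t) (Γ k) +
          vecMulVec (Γ k) (M t) * (B k)ᵀ + vecMulVec (Γ k) (Γ k))) i j) t)
    (Q : ℝ → ((Fin d × Fin d) ⊕ Fin d) → ℝ)
    (hQ : ∀ t : ℝ, Q t = Sum.elim (Matrix.vecFin (P t)) (M t))
    (𝔸 : Matrix ((Fin d × Fin d) ⊕ Fin d) ((Fin d × Fin d) ⊕ Fin d) ℝ)
    (h𝔸 : 𝔸 = Matrix.fromBlocks
      (((1 : Matrix (Fin d) (Fin d) ℝ) ⊗ₖ A) + (A ⊗ₖ (1 : Matrix (Fin d) (Fin d) ℝ)) +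
        ∑ i : Fin m, (B i ⊗ₖ B i))
      (kronMatVec (1 : Matrix (Fin d) (Fin d) ℝ) Λ +
        kronVecMat Λ (1 : Matrix (Fin d) (Fin d) ℝ) +
        ∑ i : Fin m, (kronVecMat (Γ i) (B i) + kronMatVec (B i) (Γ i)))
      0 A)
    (S : ((Fin d × Fin d) ⊕ Fin d) → ℝ)
    (hS : S = Sum.elim (∑ i : Fin m,
      (kronVecMat (Γ i) (1 : Matrix (Fin d) (Fin d) ℝ)).mulVec (Γ i)) Λ) :
    ∀ t : ℝ, HasDerivAt Q (𝔸.mulVec (Q t) + S) t := by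
  have hQfun : Q = fun s => Sum.elim (Matrix.vecFin (P s)) (M s) := funext hQ
  subst hQfun h𝔸 hS
  intro t
  rw [hasDerivAt_pi]
  intro p
  match p with
  | Sum.inr k =>
    have := (hasDerivAt_pi.mp (hM t)) k
    refine this.congr_deriv (Eq.symm ?_)
    simp [Matrix.fromBlocks_mulVec, Matrix.mulVec, dotProduct]
  | Sum.inl p =>
    have := hP t p.2 p.1
    refine this.congr_deriv (Eq.symm ?_)
    have swap3 : ∀ (f : Fin d → Fin d → Fin m → ℝ),
        ∑ x : Fin d, ∑ y : Fin d, ∑ k : Fin m, f x y k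
          = ∑ k : Fin m, ∑ x : Fin d, ∑ y : Fin d, f x y k := by
      intro f
      rw [show (∑ x : Fin d, ∑ y : Fin d, ∑ k : Fin m, f x y k)
          = ∑ x : Fin d, ∑ k : Fin m, ∑ y : Fin d, f x y k from
        Finset.sum_congr rfl fun x _ => Finset.sum_comm]
      exact Finset.sum_comm
    have swap2 : ∀ (f : Fin d → Fin m → ℝ),
        ∑ x : Fin d, ∑ k : Fin m, f x k = ∑ k : Fin m, ∑ x : Fin d, f x k := by
      intro f; exact Finset.sum_comm 
    simp only [Matrix.fromBlocks_mulVec, Sum.elim_inl, Pi.add_apply, Matrix.mulVec,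
      dotProduct, Matrix.vecFin, kronVecMat, kronMatVec, Matrix.kroneckerMap_apply,
      Matrix.add_apply, Matrix.sum_apply, Finset.sum_apply, Matrix.one_apply,
      Matrix.mul_apply, Matrix.vecMulVec_apply, Matrix.transpose_apply, add_mul, mul_add,
      ite_mul, mul_ite, mul_zero, zero_mul, Finset.sum_add_distrib, Finset.mul_sum,
      Finset.sum_mul, Finset.sum_ite_eq, Finset.sum_ite_eq', Finset.mem_univ, if_true,
      Fintype.sum_prod_type, Function.comp_apply, Function.comp]
    simp only [Sum.elim_inr, Finset.sum_ite_irrel, Finset.sum_const_zero,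
      Finset.sum_ite_eq, Finset.mem_univ, if_true]
    rw [swap3, swap2, swap2]
    simp only [mul_comm, mul_left_comm, mul_assoc]
    ring
end

section
/- Let s, b, ρ, σ₁₁, σ₂₂, σ₃₃ be real numbers with s > 0, b > 0, ρ > 0, σ₁₁² < 2s, σ₂₂² < 2 and σ₃₃² < 2b. Then there exist α₂ > 0 and α₃ ≥ 0 such that for all x, y, z ∈ ℝ: ρ·x·s(y − x) + s·y·(x(ρ − z) − y) + s·(z − 2ρ)·(xy − bz) + (1/2)·(ρσ₁₁²x² + sσ₂₂²y² + sσ₃₃²z²) ≤ −α₂·(ρx² + sy² + s(z − 2ρ)²) + α₃. -/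
/-!
The left-hand side expands to the diagonal quadratic form
`-ρ (s - σ₁₁²/2) x² - s (1 - σ₂₂²/2) y² - s (b - σ₃₃²/2) z² + 2ρsb z`: the cubic terms
`∓ s x y z` and the cross terms `ρ s x y` cancel. All three diagonal coefficients are positive,
so a small multiple of `V` can be added while keeping the `x²`, `y²` terms nonpositive and the
`z`-part a concave quadratic, which is bounded above.
-/

lemma mul_sub_mul_sq_le_sq_div (a c z : ℝ) (ha : 0 < a) :
    c * z - a * z ^ 2 ≤ c ^ 2 / (4 * a) := by
  rw [le_div_iff₀ (by positivity)]
  nlinarith [sq_nonneg (2 * a * z - c)]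

lemma exists_quadratic_form_le_neg_mul_add {ρ s A C D : ℝ} (hρ : 0 < ρ) (hs : 0 < s)
    (hA : 0 < A) (hC : 0 < C) (hD : 0 < D) (e k : ℝ) :
    ∃ α₂ : ℝ, 0 < α₂ ∧ ∃ α₃ : ℝ, 0 ≤ α₃ ∧ ∀ x y z : ℝ,
      -(ρ * A * x ^ 2) - s * C * y ^ 2 + s * (e * z - D * z ^ 2) ≤
        -α₂ * (ρ * x ^ 2 + s * y ^ 2 + s * (z - k) ^ 2) + α₃ := by
  set α := min A (min C (D / 2))
  have hαA : α ≤ A := min_le_left _ _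
  have hαC : α ≤ C := (min_le_right _ _).trans (min_le_left _ _)
  have hαD : α ≤ D / 2 := (min_le_right _ _).trans (min_le_right _ _)
  have hα_pos : 0 < α := lt_min hA (lt_min hC (half_pos hD))
  have hDα : 0 < D - α := by linarith
  refine ⟨α, hα_pos, s * ((e - 2 * α * k) ^ 2 / (4 * (D - α)) + α * k ^ 2), by positivity,
    fun x y z => ?_⟩
  have hz := mul_le_mul_of_nonneg_left (mul_sub_mul_sq_le_sq_div (D - α) (e - 2 * α * k) z hDα)
    hs.le
  have hx : 0 ≤ ρ * (A - α) * x ^ 2 := by have := sub_nonneg.2 hαA; positivity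
  have hy : 0 ≤ s * (C - α) * y ^ 2 := by have := sub_nonneg.2 hαC; positivity
  linear_combination hz + hx + hy

theorem lorenz_dissipative_general
    (s b ρ σ₁₁ σ₂₂ σ₃₃ : ℝ)
    (hρ : 0 < ρ)
    (h₁₁ : σ₁₁ ^ 2 < 2 * s) (h₂₂ : σ₂₂ ^ 2 < 2) (h₃₃ : σ₃₃ ^ 2 < 2 * b) :
    ∃ α₂ : ℝ, 0 < α₂ ∧ ∃ α₃ : ℝ, 0 ≤ α₃ ∧ ∀ x y z : ℝ,
      ρ * x * (s * (y - x)) + s * y * (x * (ρ - z) - y) +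
          s * (z - 2 * ρ) * (x * y - b * z) +
          (1 / 2) * (ρ * σ₁₁ ^ 2 * x ^ 2 + s * σ₂₂ ^ 2 * y ^ 2 + s * σ₃₃ ^ 2 * z ^ 2) ≤
        -α₂ * (ρ * x ^ 2 + s * y ^ 2 + s * (z - 2 * ρ) ^ 2) + α₃ := by
  have hs : 0 < s := by nlinarith [sq_nonneg σ₁₁]
  obtain ⟨α₂, hα₂, α₃, hα₃, hbound⟩ := exists_quadratic_form_le_neg_mul_add hρ hs
    (A := s - σ₁₁ ^ 2 / 2) (C := 1 - σ₂₂ ^ 2 / 2) (D := b - σ₃₃ ^ 2 / 2)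
    (by linarith) (by linarith) (by linarith) (2 * ρ * b) (2 * ρ)
  refine ⟨α₂, hα₂, α₃, hα₃, fun x y z => ?_⟩
  calc _ = -(ρ * (s - σ₁₁ ^ 2 / 2) * x ^ 2) - s * (1 - σ₂₂ ^ 2 / 2) * y ^ 2 +
        s * (2 * ρ * b * z - (b - σ₃₃ ^ 2 / 2) * z ^ 2) := by ring
    _ ≤ _ := hbound x y z

/-- Mean-square dissipativity estimate for the stochastic Lorenz system with diagonal
linear multiplicative noise, with Lyapunov function `V(x,y,z) = ρx² + sy² + s(z−2ρ)²`. -/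
theorem lorenz_dissipative
    (s b ρ σ₁₁ σ₂₂ σ₃₃ : ℝ)
    (hs : 0 < s) (hb : 0 < b) (hρ : 0 < ρ)
    (h₁₁ : σ₁₁ ^ 2 < 2 * s) (h₂₂ : σ₂₂ ^ 2 < 2) (h₃₃ : σ₃₃ ^ 2 < 2 * b) :
    ∃ α₂ : ℝ, 0 < α₂ ∧ ∃ α₃ : ℝ, 0 ≤ α₃ ∧ ∀ x y z : ℝ,
      ρ * x * (s * (y - x)) + s * y * (x * (ρ - z) - y) +
          s * (z - 2 * ρ) * (x * y - b * z) +
          (1 / 2) * (ρ * σ₁₁ ^ 2 * x ^ 2 + s * σ₂₂ ^ 2 * y ^ 2 + s * σ₃₃ ^ 2 * z ^ 2) ≤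
        -α₂ * (ρ * x ^ 2 + s * y ^ 2 + s * (z - 2 * ρ) ^ 2) + α₃ :=
  lorenz_dissipative_general s b ρ σ₁₁ σ₂₂ σ₃₃ hρ h₁₁ h₂₂ h₃₃
end
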